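/- The stabilizer of P in SU(3) under the action g · P = g P gᵀ equals the fixed point set of σᴳ in SU(3), and both equal the circle group U(1) = {diag(a, a⁻¹, 1) : a ∈ ℂ, |a| = 1}; i.e. {g ∈ SU(3) : g P gᵀ = P} = {g ∈ SU(3) : P (gᵀ)⁻¹ P = g} = {diag(a, a⁻¹, 1) : a ∈ ℂ, |a| = 1}. -/

import Mathlib

/-! For unitary `g` the inverse of `gᵀ` is the entrywise conjugate `ḡ`, so, as `P² = 1`, both
`g P gᵀ = P` and `P (gᵀ)⁻¹ P = g` say `g P = P ḡ`. Since `P` swaps the first two coordinates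
with the phases `ε²`, `ε⁴`, comparing an entry of `g P = P ḡ` with the conjugate of its mirror
entry gives `ω z = z` for each off-diagonal entry `z`, with `ω ∈ {ε², ε⁴}` different from `1`.
Hence `g = diag(a, ā, c)`; unitarity gives `|a| = 1` and `det g = 1` gives `c = 1`. -/

open Complex Matrix

noncomputable section

abbrev M3 := Matrix (Fin 3) (Fin 3) ℂ

/-- ε = exp(iπ/3). -/
def eps : ℂ := Complex.exp (Real.pi * Complex.I / 3)

/-- The matrix P with rows (0, ε², 0), (ε⁴, 0, 0), (0, 0, 1). -/
def Pm : M3 := !![0, eps ^ 2, 0; eps ^ 4, 0, 0; 0, 0, 1]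

/-- SU(3). -/
def SU3 : Set M3 := {g : M3 | g * gᴴ = 1 ∧ g.det = 1}

namespace Matrix

variable {n R : Type*} [Fintype n] [DecidableEq n] [CommRing R] [StarRing R]

lemma transpose_mul_map_star_of_mul_conjTranspose_eq_one {g : Matrix n n R} (hg : g * gᴴ = 1) :
    gᵀ * g.map star = 1 := by
  rw [← conjTranspose_transpose, ← transpose_mul, mul_eq_one_comm.mp hg, transpose_one]

lemma map_star_mul_transpose_of_mul_conjTranspose_eq_one {g : Matrix n n R}
    (hg : g * gᴴ = 1) : g.map star * gᵀ = 1 := by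
  rw [← conjTranspose_transpose, ← transpose_mul, hg, transpose_one]

lemma mul_mul_transpose_eq_iff {g P : Matrix n n R} (hg : g * gᴴ = 1) :
    g * P * gᵀ = P ↔ g * P = P * g.map star := by
  constructor
  · intro h
    conv_rhs => rw [← h]
    rw [Matrix.mul_assoc, transpose_mul_map_star_of_mul_conjTranspose_eq_one hg, mul_one]
  · intro h
    rw [h, Matrix.mul_assoc, map_star_mul_transpose_of_mul_conjTranspose_eq_one hg, mul_one]

lemma mul_transpose_inv_mul_eq_iff {g P : Matrix n n R} (hg : g * gᴴ = 1) (hP : P * P = 1) :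
    P * (gᵀ)⁻¹ * P = g ↔ g * P = P * g.map star := by
  rw [inv_eq_right_inv (transpose_mul_map_star_of_mul_conjTranspose_eq_one hg)]
  constructor
  · intro h
    conv_lhs => rw [← h]
    rw [Matrix.mul_assoc, hP, mul_one]
  · intro h
    rw [← h, Matrix.mul_assoc, hP, mul_one]

end Matrix

lemma eps_pow_three : eps ^ 3 = -1 := by
  rw [eps, ← Complex.exp_nat_mul, ← Complex.exp_pi_mul_I]
  push_cast
  ring_nf

lemma eps_pow_six : eps ^ 6 = 1 := by
  rw [show eps ^ 6 = (eps ^ 3) ^ 2 by ring, eps_pow_three]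
  norm_num

lemma eps_ne_zero : eps ≠ 0 := Complex.exp_ne_zero _

lemma eps_eq_exp_ofReal_mul_I : eps = exp (↑(Real.pi / 3) * I) := by
  rw [eps]
  push_cast
  ring_nf

lemma norm_eps : ‖eps‖ = 1 := by
  rw [eps_eq_exp_ofReal_mul_I, Complex.norm_exp_ofReal_mul_I]

lemma re_eps : eps.re = 1 / 2 := by
  rw [eps_eq_exp_ofReal_mul_I, Complex.exp_ofReal_mul_I_re, Real.cos_pi_div_three]

lemma conj_eps_sq : starRingEnd ℂ (eps ^ 2) = eps ^ 4 := by
  rw [map_pow, ← Complex.inv_eq_conj norm_eps, inv_pow]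
  exact inv_eq_of_mul_eq_one_right (by linear_combination eps_pow_six)

lemma conj_eps_four : starRingEnd ℂ (eps ^ 4) = eps ^ 2 := by
  rw [← conj_eps_sq, Complex.conj_conj]

lemma eps_sq_ne_one : eps ^ 2 ≠ 1 := by
  intro h
  have h1 : eps = -1 := by linear_combination -eps * h + eps_pow_three
  have h2 := congrArg Complex.re h1
  rw [re_eps] at h2
  norm_num at h2

lemma eps_four_ne_one : eps ^ 4 ≠ 1 := fun h =>
  eps_sq_ne_one (by linear_combination -eps ^ 2 * h + eps_pow_six)

lemma Pm_mul_self : Pm * Pm = 1 := by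
  have h : eps ^ 2 * eps ^ 4 = 1 := by linear_combination eps_pow_six
  ext i j
  fin_cases i <;> fin_cases j <;>
    simp [Pm, Matrix.mul_apply, Fin.sum_univ_three, h, mul_comm (eps ^ 4)]

lemma diagonal_mul_Pm (a b c : ℂ) : diagonal ![a, b, c] * Pm = Pm * diagonal ![b, a, c] := by
  ext i j
  fin_cases i <;> fin_cases j <;> simp [Pm, Matrix.mul_apply, Fin.sum_univ_three, mul_comm]

lemma eq_diagonal_of_mul_Pm_eq {g : M3} (h : g * Pm = Pm * g.map star) :
    g = diagonal ![g 0 0, starRingEnd ℂ (g 0 0), g 2 2] := by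
  have e (i j : Fin 3) := congr_fun (congr_fun h i) j
  have e00 := e 0 0; have e01 := e 0 1; have e02 := e 0 2
  have e11 := e 1 1; have e12 := e 1 2
  have e20 := e 2 0; have e21 := e 2 1
  simp only [Pm, Matrix.mul_apply, Fin.sum_univ_three, of_apply, cons_val', cons_val_zero,
    cons_val_one, cons_val, cons_val_fin_one, map_apply, RCLike.star_def, mul_zero, zero_mul,
    mul_one, one_mul, add_zero, zero_add] at e00 e01 e02 e11 e12 e20 e21
  have ce11 := congrArg (starRingEnd ℂ) e11
  have ce12 := congrArg (starRingEnd ℂ) e12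
  have ce21 := congrArg (starRingEnd ℂ) e21
  simp only [map_mul, conj_eps_sq, conj_eps_four, Complex.conj_conj] at ce11 ce12 ce21
  have h01 : g 0 1 = 0 := (mul_left_eq_self₀.mp (by
    linear_combination -ce11 - eps ^ 2 * e00 + g 0 1 * eps_pow_six)).resolve_left eps_sq_ne_one
  have h10 : g 1 0 = 0 := by simpa [h01, eps_ne_zero] using e11
  have h02 : g 0 2 = 0 := (mul_left_eq_self₀.mp (by
    linear_combination -e02 - eps ^ 2 * ce12)).resolve_left eps_four_ne_one
  have h12 : g 1 2 = 0 := by simpa [h02] using e12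
  have h21 : g 2 1 = 0 := (mul_left_eq_self₀.mp (by
    linear_combination ce21 + eps ^ 4 * e20 - eps ^ 2 * g 2 1 * eps_pow_six)).resolve_left
      eps_sq_ne_one
  have h20 : g 2 0 = 0 := by simpa [h21] using e20.symm
  have h11 : g 1 1 = starRingEnd ℂ (g 0 0) := by
    rw [mul_right_cancel₀ (pow_ne_zero 2 eps_ne_zero) (e01.trans (mul_comm _ _)),
      Complex.conj_conj]
  ext i j
  fin_cases i <;> fin_cases j <;> simp [h01, h02, h10, h12, h20, h21, h11]

lemma diagonal_mem_SU3 {a : ℂ} (ha : ‖a‖ = 1) : diagonal ![a, a⁻¹, 1] ∈ SU3 := by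
  have ha0 : a ≠ 0 := norm_ne_zero_iff.mp (by simp [ha])
  refine ⟨?_, by simp [det_diagonal, Fin.prod_univ_three, ha0]⟩
  rw [diagonal_conjTranspose, diagonal_mul_diagonal, ← diagonal_one]
  congr 1
  ext i
  fin_cases i <;> simp [Complex.inv_eq_conj ha, Complex.mul_conj', Complex.conj_mul', ha]

lemma exists_eq_diagonal_of_mem_SU3 {g : M3} (hg : g ∈ SU3) (h : g * Pm = Pm * g.map star) :
    ∃ a : ℂ, ‖a‖ = 1 ∧ g = diagonal ![a, a⁻¹, 1] := by
  have hdiag := eq_diagonal_of_mul_Pm_eq h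
  obtain ⟨hU, hdet⟩ := hg
  rw [hdiag, diagonal_conjTranspose, diagonal_mul_diagonal] at hU
  have h00 : g 0 0 * starRingEnd ℂ (g 0 0) = 1 := by simpa using congr_fun (congr_fun hU 0) 0
  have hnorm : ‖g 0 0‖ = 1 :=
    (pow_eq_one_iff_of_nonneg (norm_nonneg _) two_ne_zero).mp
      (by exact_mod_cast (Complex.mul_conj' _).symm.trans h00)
  have h22 : g 2 2 = 1 := by
    rw [hdiag, det_diagonal, Fin.prod_univ_three] at hdet
    simpa [h00] using hdet
  refine ⟨g 0 0, hnorm, hdiag.trans ?_⟩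
  rw [h22, Complex.inv_eq_conj hnorm]

/-- The stabilizer of P in SU(3) under g·P = g P gᵀ equals the fixed point set of σᴳ in
SU(3), and both equal U(1) = {diag(a, a⁻¹, 1) : |a| = 1}. -/
theorem statement10 :
    {g : M3 | g ∈ SU3 ∧ g * Pm * gᵀ = Pm}
      = {g : M3 | g ∈ SU3 ∧ Pm * (gᵀ)⁻¹ * Pm = g} ∧
    {g : M3 | g ∈ SU3 ∧ g * Pm * gᵀ = Pm}
      = {g : M3 | ∃ a : ℂ, ‖a‖ = 1 ∧ g = Matrix.diagonal ![a, a⁻¹, 1]} := by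
  refine ⟨Set.ext fun g => and_congr_right fun hg => ?_, Set.ext fun g => ⟨?_, ?_⟩⟩
  · exact (mul_mul_transpose_eq_iff hg.1).trans
      (mul_transpose_inv_mul_eq_iff hg.1 Pm_mul_self).symm
  · rintro ⟨hg, h⟩
    exact exists_eq_diagonal_of_mem_SU3 hg ((mul_mul_transpose_eq_iff hg.1).mp h)
  · rintro ⟨a, ha, rfl⟩
    refine ⟨diagonal_mem_SU3 ha, (mul_mul_transpose_eq_iff (diagonal_mem_SU3 ha).1).mpr ?_⟩
    have hstar : (fun i => star (![a, a⁻¹, 1] i)) = ![a⁻¹, a, 1] := by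
      ext i
      fin_cases i <;> simp [← Complex.inv_eq_conj ha]
    rw [diagonal_map (star_zero ℂ), hstar]
    exact diagonal_mul_Pm a a⁻¹ 1
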